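/- Let d ∈ 2ℕ and let a = (a_{k,l})_{k,l ∈ ℤ₊^{d/2}} be a positive (as an operator on ℓ₂(ℤ₊^{d/2})) rapidly decreasing double sequence. Then its operator square root b = a^{1/2} is also rapidly decreasing: for each m ≥ 0, r_m(a^{1/2})² ≲ r_{2m + d/2}(a). -/

import Mathlib

open scoped ENNReal InnerProductSpace

/-- The index set `ℤ₊^{d/2}`. -/
abbrev Idx (d : ℕ) := Fin (d / 2) → ℕ

/-- The Hilbert space `ℓ₂(ℤ₊^{d/2})`. -/
noncomputable abbrev SeqH (d : ℕ) := lp (fun _ : Idx d => ℂ) 2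

/-- The seminorm `r_m(a) = (Σ_{k,l} (|k|+1)^{2m} (|l|+1)^{2m} |a_{k,l}|²)^{1/2}`. -/
noncomputable def rsem (d m : ℕ) (a : Idx d → Idx d → ℂ) : ℝ≥0∞ :=
  (∑' k : Idx d, ∑' l : Idx d,
      ((∑ i, (k i : ℝ≥0∞)) + 1) ^ (2 * m) * ((∑ i, (l i : ℝ≥0∞)) + 1) ^ (2 * m) *
        (‖a k l‖₊ : ℝ≥0∞) ^ 2) ^ (1 / 2 : ℝ)

/-- A double sequence is rapidly decreasing if all seminorms `r_m` are finite. -/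
def RapidlyDecreasing (d : ℕ) (a : Idx d → Idx d → ℂ) : Prop :=
  ∀ m : ℕ, rsem d m a < ⊤

/-- The matrix of an operator on `ℓ₂(ℤ₊^{d/2})` with respect to the standard basis. -/
noncomputable def entries (d : ℕ) (A : SeqH d →L[ℂ] SeqH d) (k l : Idx d) : ℂ :=
  ⟪A (lp.single 2 l (1 : ℂ)), lp.single 2 k (1 : ℂ)⟫_ℂ

/-! With `B² = A` and `B` self-adjoint, `b_{kl} = ⟪B e_l, e_k⟫ = ⟪e_l, B e_k⟫` is bounded by both
`‖B e_k‖` and `‖B e_l‖`, while `a_{kk} = ‖B e_k‖²`; this is `|b_{kl}|² ≤ |a_{kk}|^{1/2} |a_{ll}|^{1/2}`.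
Hence `r_m(b)² ≤ (Σ_k (|k|+1)^{2m} |a_{kk}|^{1/2})²`, and Hölder's inequality with exponents `4`
and `4/3` bounds that sum by `r_{2m+n}(a)^{1/2} (Σ_k (|k|+1)^{-4n/3})^{3/4}`, `n = d/2`. The last
series converges because `(|k|+1)^n ≥ ∏ᵢ (kᵢ+1)` and `Σ_j (j+1)^{-4/3} < ∞`. -/

open scoped NNReal

namespace ENNReal

theorem tsum_mul_le_tsum_rpow_mul_tsum_rpow {ι : Type*} (u v : ι → ℝ≥0∞) {p q : ℝ}
    (hpq : p.HolderConjugate q) :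
    ∑' i, u i * v i ≤ (∑' i, u i ^ p) ^ (1 / p) * (∑' i, v i ^ q) ^ (1 / q) := by
  let _ : MeasurableSpace ι := ⊤
  simpa only [MeasureTheory.lintegral_count, Pi.mul_apply] using
    ENNReal.lintegral_mul_le_Lp_mul_Lq .count hpq (measurable_from_top (f := u)).aemeasurable
      (measurable_from_top (f := v)).aemeasurable

theorem tsum_fin_pi_prod (n : ℕ) (h : ℕ → ℝ≥0∞) :
    ∑' k : Fin n → ℕ, ∏ i, h (k i) = (∑' j, h j) ^ n := by
  induction n with
  | zero => simp
  | succ n ih =>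
    rw [← (Fin.consEquiv fun _ => ℕ).tsum_eq, ENNReal.tsum_prod']
    simp [Fin.prod_univ_succ, ENNReal.tsum_mul_left, ENNReal.tsum_mul_right, ih, pow_succ']

theorem tsum_nat_add_one_rpow_neg_lt_top {p : ℝ} (hp : 1 < p) :
    ∑' j : ℕ, ((j : ℝ≥0∞) + 1) ^ (-p) < ∞ := by
  have hsum : Summable fun j : ℕ => ((j + 1 : ℕ) : ℝ) ^ (-p) :=
    (summable_nat_add_iff 1).mpr (Real.summable_nat_rpow.mpr (by linarith))
  convert hsum.tsum_ofReal_lt_top using 3 with j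
  rw [← ENNReal.ofReal_rpow_of_pos (by positivity)]
  simp [ENNReal.ofReal_add]

end ENNReal

section SelfAdjoint

variable {𝕜 E : Type*} [RCLike 𝕜] [NormedAddCommGroup E] [InnerProductSpace 𝕜 E]
  [CompleteSpace E] {T : E →L[𝕜] E}

theorem IsSelfAdjoint.nnnorm_inner_apply_sq_le (hT : IsSelfAdjoint T) {u v : E}
    (hu : ‖u‖₊ = 1) (hv : ‖v‖₊ = 1) : ‖⟪T v, u⟫_𝕜‖₊ ^ 2 ≤ ‖T u‖₊ * ‖T v‖₊ := by
  have hsymm : ⟪T v, u⟫_𝕜 = ⟪v, T u⟫_𝕜 := hT.isSymmetric v u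
  have h_left : ‖⟪T v, u⟫_𝕜‖₊ ≤ ‖T u‖₊ := by
    simpa [hsymm, hv] using nnnorm_inner_le_nnnorm (𝕜 := 𝕜) v (T u)
  have h_right : ‖⟪T v, u⟫_𝕜‖₊ ≤ ‖T v‖₊ := by
    simpa [hu] using nnnorm_inner_le_nnnorm (𝕜 := 𝕜) (T v) u
  exact (sq _).trans_le (mul_le_mul' h_left h_right)

theorem IsSelfAdjoint.nnnorm_inner_comp_self_apply_self (hT : IsSelfAdjoint T) (u : E) :
    ‖⟪(T ∘L T) u, u⟫_𝕜‖₊ = ‖T u‖₊ ^ 2 := by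
  have hsymm : ⟪T (T u), u⟫_𝕜 = ⟪T u, T u⟫_𝕜 := hT.isSymmetric (T u) u
  rw [ContinuousLinearMap.comp_apply, hsymm, inner_self_eq_norm_sq_to_K]
  ext
  simp

end SelfAdjoint

noncomputable def weight {n : ℕ} (k : Fin n → ℕ) : ℝ≥0∞ := (∑ i, (k i : ℝ≥0∞)) + 1

@[simp] lemma weight_ne_zero {n : ℕ} (k : Fin n → ℕ) : weight k ≠ 0 := by simp [weight]

@[simp] lemma weight_ne_top {n : ℕ} (k : Fin n → ℕ) : weight k ≠ ∞ := by simp [weight]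

lemma prod_add_one_le_weight_pow {n : ℕ} (k : Fin n → ℕ) :
    ∏ i, ((k i : ℝ≥0∞) + 1) ≤ weight k ^ n := by
  simpa using Finset.prod_le_pow_card Finset.univ _ (weight k) fun i _ =>
    add_le_add_left (Finset.single_le_sum (f := fun i => (k i : ℝ≥0∞)) (by simp)
      (Finset.mem_univ i)) 1

lemma tsum_weight_rpow_neg_lt_top {n : ℕ} {p : ℝ} (hp : 1 < p) :
    ∑' k : Fin n → ℕ, weight k ^ (-(p * n)) < ∞ := by
  calc ∑' k : Fin n → ℕ, weight k ^ (-(p * n))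
      ≤ ∑' k : Fin n → ℕ, ∏ i, ((k i : ℝ≥0∞) + 1) ^ (-p) := by
        refine ENNReal.tsum_le_tsum fun k => ?_
        rw [ENNReal.prod_rpow_of_ne_top (by simp), show -(p * n) = n * -p by ring,
          ENNReal.rpow_mul, ENNReal.rpow_natCast, ENNReal.rpow_neg, ENNReal.rpow_neg]
        exact ENNReal.inv_le_inv.2
          (ENNReal.rpow_le_rpow (prod_add_one_le_weight_pow k) (by linarith))
    _ = (∑' j : ℕ, ((j : ℝ≥0∞) + 1) ^ (-p)) ^ n :=
        ENNReal.tsum_fin_pi_prod n fun j => ((j : ℝ≥0∞) + 1) ^ (-p)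
    _ < ∞ := ENNReal.pow_lt_top (ENNReal.tsum_nat_add_one_rpow_neg_lt_top hp)

/-- Hölder's inequality for `(|k|+1)^{2m} = (|k|+1)^{2m+n} · (|k|+1)^{-n}`. -/
lemma tsum_weight_pow_mul_le {n : ℕ} (m : ℕ) (β : (Fin n → ℕ) → ℝ≥0∞) :
    ∑' k, weight k ^ (2 * m) * β k ≤
      (∑' k, weight k ^ (4 * (2 * m + n)) * β k ^ 4) ^ (1 / 4 : ℝ) *
        (∑' k : Fin n → ℕ, weight k ^ (-(4 / 3 * n : ℝ))) ^ (3 / 4 : ℝ) := by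
  have hsplit : ∀ k : Fin n → ℕ, weight k ^ (2 * m) * β k =
      (weight k ^ ((2 * m + n : ℕ) : ℝ) * β k) * weight k ^ (-(n : ℝ)) := fun k => by
    rw [mul_right_comm, ← ENNReal.rpow_add _ _ (by simp) (by simp), ← ENNReal.rpow_natCast]
    push_cast
    ring_nf
  have hfirst : ∀ k : Fin n → ℕ, (weight k ^ ((2 * m + n : ℕ) : ℝ) * β k) ^ (4 : ℝ) =
      weight k ^ (4 * (2 * m + n)) * β k ^ 4 := fun k => by
    rw [ENNReal.mul_rpow_of_nonneg _ _ (by norm_num), ← ENNReal.rpow_mul,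
      ← ENNReal.rpow_natCast, ← ENNReal.rpow_natCast (β k)]
    push_cast
    ring_nf
  have hsecond : ∀ k : Fin n → ℕ, (weight k ^ (-(n : ℝ))) ^ (4 / 3 : ℝ) =
      weight k ^ (-(4 / 3 * n : ℝ)) := fun k => by
    rw [← ENNReal.rpow_mul]
    ring_nf
  have holder := ENNReal.tsum_mul_le_tsum_rpow_mul_tsum_rpow
    (fun k => weight k ^ ((2 * m + n : ℕ) : ℝ) * β k) (fun k => weight k ^ (-(n : ℝ)))
    (Real.holderConjugate_iff.mpr ⟨by norm_num, by norm_num⟩ : (4 : ℝ).HolderConjugate (4 / 3))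
  simp only [hfirst, hsecond, ← hsplit] at holder
  convert holder using 3
  norm_num

lemma rsem_sq (d m : ℕ) (a : Idx d → Idx d → ℂ) :
    rsem d m a ^ 2 =
      ∑' k, ∑' l, weight k ^ (2 * m) * weight l ^ (2 * m) * (‖a k l‖₊ : ℝ≥0∞) ^ 2 := by
  rw [rsem, ← ENNReal.rpow_natCast, ← ENNReal.rpow_mul]
  norm_num
  rfl

lemma rsem_sq_le_sq_tsum {d : ℕ} (m : ℕ) {b : Idx d → Idx d → ℂ} (β : Idx d → ℝ≥0)
    (hb : ∀ k l, ‖b k l‖₊ ^ 2 ≤ β k * β l) :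
    rsem d m b ^ 2 ≤ (∑' k, weight k ^ (2 * m) * β k) ^ 2 := by
  rw [rsem_sq, sq, ← ENNReal.tsum_mul_right]
  refine ENNReal.tsum_le_tsum fun k => ?_
  rw [← ENNReal.tsum_mul_left]
  refine ENNReal.tsum_le_tsum fun l => ?_
  calc weight k ^ (2 * m) * weight l ^ (2 * m) * (‖b k l‖₊ : ℝ≥0∞) ^ 2
      ≤ weight k ^ (2 * m) * weight l ^ (2 * m) * (β k * β l) := by
        gcongr
        exact_mod_cast hb k l
    _ = _ := by ring

lemma tsum_weight_pow_mul_diag_le_rsem_sq {d : ℕ} (M : ℕ) (a : Idx d → Idx d → ℂ) :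
    ∑' k, weight k ^ (4 * M) * (‖a k k‖₊ : ℝ≥0∞) ^ 2 ≤ rsem d M a ^ 2 := by
  rw [rsem_sq]
  refine ENNReal.tsum_le_tsum fun k => le_of_eq_of_le ?_ (ENNReal.le_tsum k)
  ring

lemma rsem_sq_le_of_nnnorm_sq_le {d : ℕ} (m : ℕ) {a b : Idx d → Idx d → ℂ}
    (β : Idx d → ℝ≥0) (hb : ∀ k l, ‖b k l‖₊ ^ 2 ≤ β k * β l) (hβ : ∀ k, ‖a k k‖₊ = β k ^ 2) :
    rsem d m b ^ 2 ≤
      (∑' k : Idx d, weight k ^ (-(4 / 3 * (d / 2 : ℕ) : ℝ))) ^ (3 / 2 : ℝ) *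
        rsem d (2 * m + d / 2) a := by
  set K := ∑' k : Idx d, weight k ^ (-(4 / 3 * (d / 2 : ℕ) : ℝ))
  set r := rsem d (2 * m + d / 2) a
  have hdiag : ∑' k, weight k ^ (4 * (2 * m + d / 2)) * (β k : ℝ≥0∞) ^ 4 ≤ r ^ 2 := by
    convert tsum_weight_pow_mul_diag_le_rsem_sq (2 * m + d / 2) a using 4 with k
    rw [hβ k]
    push_cast
    ring
  calc rsem d m b ^ 2
      ≤ (∑' k, weight k ^ (2 * m) * β k) ^ 2 := rsem_sq_le_sq_tsum m β hb
    _ ≤ ((r ^ 2) ^ (1 / 4 : ℝ) * K ^ (3 / 4 : ℝ)) ^ 2 := by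
        gcongr
        exact (tsum_weight_pow_mul_le m _).trans (by gcongr)
    _ = K ^ (3 / 2 : ℝ) * r := by
        simp only [mul_pow, ← ENNReal.rpow_natCast, ← ENNReal.rpow_mul]
        norm_num
        exact mul_comm _ _

theorem stmt7_general (d : ℕ)
    (A B : SeqH d →L[ℂ] SeqH d) (hB : B.IsPositive)
    (hBB : B.comp B = A)
    (ha : RapidlyDecreasing d (entries d A)) :
    RapidlyDecreasing d (entries d B) ∧
      ∃ C : ℝ≥0∞, C ≠ ⊤ ∧ ∀ m : ℕ,
        rsem d m (entries d B) ^ 2 ≤ C * rsem d (2 * m + d / 2) (entries d A) := by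
  have he : ∀ k : Idx d, ‖(lp.single 2 k (1 : ℂ) : SeqH d)‖₊ = 1 := fun k => by
    ext; simp [lp.norm_single]
  have hbound : ∀ m : ℕ, rsem d m (entries d B) ^ 2 ≤
      (∑' k : Idx d, weight k ^ (-(4 / 3 * (d / 2 : ℕ) : ℝ))) ^ (3 / 2 : ℝ) *
        rsem d (2 * m + d / 2) (entries d A) := fun m =>
    rsem_sq_le_of_nnnorm_sq_le m (fun k => ‖B (lp.single 2 k 1)‖₊)
      (fun k l => hB.isSelfAdjoint.nnnorm_inner_apply_sq_le (he k) (he l))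
      (fun k => hBB ▸ hB.isSelfAdjoint.nnnorm_inner_comp_self_apply_self _)
  have hC : (∑' k : Idx d, weight k ^ (-(4 / 3 * (d / 2 : ℕ) : ℝ))) ^ (3 / 2 : ℝ) ≠ ⊤ :=
    ENNReal.rpow_ne_top_of_nonneg (by norm_num) (tsum_weight_rpow_neg_lt_top (by norm_num)).ne
  refine ⟨fun m => ?_, _, hC, hbound⟩
  have hfinite := (hbound m).trans_lt (ENNReal.mul_lt_top hC.lt_top (ha _))
  exact (ENNReal.pow_lt_top_iff.1 hfinite).resolve_right two_ne_zero

/-- If `a` is a positive (as an operator on `ℓ₂(ℤ₊^{d/2})`) rapidly decreasing double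
sequence, then its operator square root `b = a^{1/2}` is also rapidly decreasing;
quantitatively, `r_m(a^{1/2})² ≲ r_{2m+d/2}(a)` for each `m ≥ 0`. -/
theorem stmt7 (d : ℕ) (hd : 0 < d) (hde : Even d)
    (A B : SeqH d →L[ℂ] SeqH d) (hA : A.IsPositive) (hB : B.IsPositive)
    (hBB : B.comp B = A)
    (ha : RapidlyDecreasing d (entries d A)) :
    RapidlyDecreasing d (entries d B) ∧
      ∃ C : ℝ≥0∞, C ≠ ⊤ ∧ ∀ m : ℕ,
        rsem d m (entries d B) ^ 2 ≤ C * rsem d (2 * m + d / 2) (entries d A) :=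
  stmt7_general d A B hB hBB ha
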